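/- arXiv:1409.3483 — 3 statements merged into one kernel-verified Lean document; each statement's English description precedes it below -/
import Mathlib

section
/- Let M be an infinite type and E an equivalence relation on Set M that is cardinality coarsening on small concepts. Then there exists a function ∂ : Set M → M realizing A[E]; that is, A[E] has a standard model on every infinite domain. -/
/-! An injection of `Set M / E` into `M` realizes `A[E]`, so it suffices that the quotient is no
larger than `M`. If it were larger, every concept would be small, so `E` would identify all
equinumerous sets and the quotient would have at most as many classes as there are cardinals
`≤ #M`, which for infinite `M` is at most `#M`. -/

universe u

open Cardinal Set

/-- The setoid on `Set M` associated to an equivalence relation `E`. -/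
def setoidOfEquiv {M : Type u} (E : Set M → Set M → Prop) (hE : Equivalence E) :
    Setoid (Set M) := ⟨E, hE⟩

/- Sending a cardinal `c' ≤ c` to its initial ordinal embeds `Iic c` into the ordinals
`≤ c.ord`, of which there are `c + 1`. -/
lemma Cardinal.mk_Iic_le_lift {c : Cardinal.{u}} (hc : ℵ₀ ≤ c) :
    #(Iic c) ≤ lift.{u + 1} c := by
  let toOrd : Iic c → Iio (c.ord + 1) :=
    fun c' => ⟨c'.1.ord, Order.lt_add_one_iff.2 (ord_le_ord.2 c'.2)⟩
  have hinj : Function.Injective toOrd := fun a b hab =>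
    Subtype.ext (ord_injective (congrArg Subtype.val hab))
  calc #(Iic c) ≤ #(Iio (c.ord + 1)) := mk_le_of_injective hinj
    _ = lift.{u + 1} (c + 1) := by
      rw [mk_Iio_ordinal, Ordinal.card_add_one, card_ord]
    _ = lift.{u + 1} c := by rw [add_one_eq hc]

lemma Cardinal.mk_quotient_le_of_forall_mk_eq {M : Type u} [Infinite M] (s : Setoid (Set M))
    (hs : ∀ X Y : Set M, #X = #Y → s X Y) : #(Quotient s) ≤ #M := by
  let card : Quotient s → Iic #M := fun q => ⟨#(q.out : Set M), mk_set_le _⟩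
  have hinj : Function.Injective card := fun q q' h => by
    rw [← Quotient.out_eq q, ← Quotient.out_eq q']
    exact Quotient.sound (hs _ _ (congrArg Subtype.val h))
  have h := (lift_mk_le'.2 ⟨⟨card, hinj⟩⟩).trans
    (lift_le.2 (mk_Iic_le_lift (aleph0_le_mk M)))
  rwa [lift_lift, lift_le] at h

lemma Setoid.exists_fun_eq_iff_of_mk_quotient_le {α β : Type u} (s : Setoid α)
    (h : #(Quotient s) ≤ #β) : ∃ d : α → β, ∀ x y, d x = d y ↔ s x y := by
  obtain ⟨f⟩ := h
  exact ⟨fun x => f ⟦x⟧, fun x y => f.injective.eq_iff.trans Quotient.eq⟩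

/-- If `E` is cardinality coarsening on small concepts, then `A[E]` has a standard model
on every infinite domain. -/
theorem exists_realization_of_ccSmall {M : Type u} [Infinite M] (E : Set M → Set M → Prop)
    (hE : Equivalence E)
    (hsmall : ∀ X Y : Set M, Cardinal.mk X = Cardinal.mk Y →
      Cardinal.mk X ≤ Cardinal.mk (Quotient (setoidOfEquiv E hE)) → E X Y) :
    ∃ d : Set M → M, ∀ X Y : Set M, d X = d Y ↔ E X Y := by
  refine (setoidOfEquiv E hE).exists_fun_eq_iff_of_mk_quotient_le (le_of_not_gt fun hlt => ?_)
  have hcard : ∀ X Y : Set M, #X = #Y → E X Y := fun X Y hXY =>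
    hsmall X Y hXY ((mk_set_le X).trans hlt.le)
  exact hlt.not_ge (mk_quotient_le_of_forall_mk_eq _ hcard)
end

section
/- Let M be an infinite type and E an equivalence relation on Set M that is bicardinality coarsening, with associated setoid sE. Then there exists a surjective function ∂ : Set M → M realizing A[E] if and only if Cardinal.mk (Quotient sE) = Cardinal.mk M and the set of cardinals strictly less than Cardinal.mk M has cardinality Cardinal.lift (Cardinal.mk M) (i.e. Cardinal.mk ↥{λ : Cardinal | λ < Cardinal.mk M} = Cardinal.lift (Cardinal.mk M), lifting universes as needed). -/
universe u

open Cardinal Set Function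

def Realizes {α β : Type*} (d : α → β) (E : α → α → Prop) : Prop :=
  ∀ x y, d x = d y ↔ E x y

theorem exists_surjective_realizes_iff {α β : Type*} (s : Setoid α) :
    (∃ d : α → β, Surjective d ∧ Realizes d s) ↔ Nonempty (Quotient s ≃ β) := by
  constructor
  · rintro ⟨d, hsurj, hd⟩
    exact ⟨(@Quotient.congrRight _ s (Setoid.ker d) fun x y => (hd x y).symm).trans
      (Setoid.quotientKerEquivOfSurjective d hsurj)⟩
  · rintro ⟨e⟩
    exact ⟨e ∘ Quotient.mk s, e.surjective.comp Quotient.mk_surjective,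
      fun x y => e.apply_eq_iff_eq.trans Quotient.eq⟩

theorem Setoid.lift_mk_quotient_le_of_ker_le {α : Type u} {β : Type*} {s : Setoid α}
    (f : α → β) (h : Setoid.ker f ≤ s) :
    lift #(Quotient s) ≤ lift.{u} #(range f) := by
  have hmap : Surjective (Setoid.map_of_le h) := by
    rintro ⟨x⟩
    exact ⟨Quotient.mk _ x, rfl⟩
  exact lift_mk_le_lift_mk_of_surjective
    (hmap.comp (Setoid.quotientKerEquivRange f).symm.surjective)

namespace Cardinal

theorem mk_Iio_le_lift (κ : Cardinal.{u}) : #(Iio κ) ≤ lift.{u + 1} κ :=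
  calc #(Iio κ) ≤ #(Iio κ.ord) :=
        mk_le_of_injective (f := fun l => ⟨l.1.ord, ord_lt_ord.2 l.2⟩)
          fun _ _ h => Subtype.ext (ord_injective (congrArg Subtype.val h))
    _ = lift.{u + 1} κ := by rw [mk_Iio_ordinal, card_ord]

theorem aleph0_le_mk_Iio {κ : Cardinal.{u}} (hκ : ℵ₀ ≤ κ) : ℵ₀ ≤ #(Iio κ) :=
  aleph0_le_mk_iff.2 <| Infinite.of_injective
    (fun n : ℕ => (⟨n, natCast_lt_aleph0.trans_le hκ⟩ : Iio κ))
    fun _ _ h => Nat.cast_injective (congrArg Subtype.val h)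

theorem mk_Iic_eq_mk_Iio {κ : Cardinal.{u}} (hκ : ℵ₀ ≤ κ) : #(Iic κ) = #(Iio κ) :=
  le_antisymm ((Iio_insert (a := κ) ▸ mk_insert_le).trans_eq (add_one_eq (aleph0_le_mk_Iio hκ)))
    (mk_le_mk_of_subset Iio_subset_Iic_self)

theorem eq_or_eq_of_add_eq {a b κ : Cardinal} (hκ : ℵ₀ ≤ κ) (h : a + b = κ) :
    a = κ ∨ b = κ := by
  by_contra! hne
  exact (add_lt_of_lt hκ ((h ▸ self_le_add_right a b).lt_of_ne hne.1)
    ((h ▸ self_le_add_left b a).lt_of_ne hne.2)).ne h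

theorem mk_setOf_add_eq_le {κ : Cardinal.{u}} (hκ : ℵ₀ ≤ κ) :
    #{p : Cardinal.{u} × Cardinal.{u} | p.1 + p.2 = κ} ≤ #(Iio κ) := by
  let f : Iic κ ⊕ Iic κ → Cardinal.{u} × Cardinal.{u} :=
    Sum.elim (fun a => (a, κ)) (fun b => (κ, b))
  have hsub : {p : Cardinal.{u} × Cardinal.{u} | p.1 + p.2 = κ} ⊆ range f := by
    rintro ⟨a, b⟩ (h : a + b = κ)
    rcases eq_or_eq_of_add_eq hκ h with rfl | rfl
    · exact ⟨.inr ⟨b, h ▸ self_le_add_left b a⟩, rfl⟩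
    · exact ⟨.inl ⟨a, h ▸ self_le_add_right a b⟩, rfl⟩
  calc #{p : Cardinal.{u} × Cardinal.{u} | p.1 + p.2 = κ}
      ≤ #(Iic κ ⊕ Iic κ) := (mk_le_mk_of_subset hsub).trans mk_range_le
    _ = #(Iio κ) := by
      rw [mk_sum, lift_id, mk_Iic_eq_mk_Iio hκ, add_eq_self (aleph0_le_mk_Iio hκ)]

end Cardinal

theorem mk_range_mk_prod_mk_compl_le (M : Type u) [Infinite M] :
    #(range fun X : Set M => (#X, #↥Xᶜ)) ≤ #(Iio #M) :=
  (mk_le_mk_of_subset (range_subset_iff.2 fun X => mk_sum_compl X)).trans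
    (mk_setOf_add_eq_le (infinite_iff.1 ‹_›))

/-- For `E` bicardinality coarsening on an infinite domain, there is a surjective abstraction
operator realizing `A[E]` iff the number of `E`-classes is `|M|` and there are exactly `|M|`
cardinals below `|M|`. -/
theorem exists_surjective_realization_iff {M : Type u} [Infinite M]
    (E : Set M → Set M → Prop) (hE : Equivalence E)
    (hbc : ∀ X Y : Set M, Cardinal.mk X = Cardinal.mk Y →
      Cardinal.mk ↥(Xᶜ) = Cardinal.mk ↥(Yᶜ) → E X Y) :
    (∃ d : Set M → M, Function.Surjective d ∧ ∀ X Y : Set M, d X = d Y ↔ E X Y) ↔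
      (Cardinal.mk (Quotient (setoidOfEquiv E hE)) = Cardinal.mk M ∧
        Cardinal.mk ↥{l : Cardinal.{u} | l < Cardinal.mk M} =
          Cardinal.lift.{u+1} (Cardinal.mk M)) := by
  refine (exists_surjective_realizes_iff (setoidOfEquiv E hE)).trans ?_
  refine ⟨fun ⟨e⟩ => ⟨mk_congr e, le_antisymm (mk_Iio_le_lift _) ?_⟩,
    fun h => Cardinal.eq.1 h.1⟩
  have hker : Setoid.ker (fun X : Set M => (#X, #↥Xᶜ)) ≤ setoidOfEquiv E hE :=
    fun X Y h => hbc X Y (congrArg Prod.fst h) (congrArg Prod.snd h)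
  calc lift.{u + 1} #M = lift #(Quotient (setoidOfEquiv E hE)) := by rw [mk_congr e]
    _ ≤ lift.{u} #(range fun X : Set M => (#X, #↥Xᶜ)) :=
      Setoid.lift_mk_quotient_le_of_ker_le _ hker
    _ ≤ #(Iio #M) := (lift_id'.{u, u + 1} _).trans_le <| mk_range_mk_prod_mk_compl_le M
end

section
/- Let M be a type with Cardinal.mk M = Cardinal.aleph 1, and define E on Set M by E(X,Y) := Cardinal.mk X = Cardinal.mk Y ∧ (X = Set.univ ↔ Y = Set.univ) (this is the paper's equivalence relation (28) interpreted on a domain of cardinality ω₁: the universe is the only member of its own class, all other sets of full cardinality form one class, and smaller sets are partitioned by cardinality). Then E is an equivalence relation on Set M which is cardinality coarsening on small concepts but not cardinality coarsening: there exist X, Y : Set M with Cardinal.mk X = Cardinal.mk Y and ¬E(X,Y). -/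
/-!
`E28 X Y` says exactly that `X` and `Y` have the same cardinality and the same answer to
"is `X` the universe?", so the quotient embeds into `Set.Iic #M × Prop`. For `#M = ℵ₁` the
cardinals `≤ ℵ₁` are the naturals, `ℵ₀` and `ℵ₁`, so the quotient is countable. A concept no
larger than the quotient is therefore smaller than `M`, hence not the universe, and two such
concepts of equal cardinality are related. On the other hand `Set.univ` and the complement of a
point are equinumerous in any infinite type, but only one of them is the universe.
-/

universe u

/-- The paper's equivalence relation (28), interpreted on a domain of cardinality `ω₁`:
two sets are equivalent iff they are equinumerous and agree on being the universe. -/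
def E28 {M : Type u} (X Y : Set M) : Prop :=
  Cardinal.mk X = Cardinal.mk Y ∧ (X = Set.univ ↔ Y = Set.univ)

open Cardinal

namespace E28

variable {M : Type u}

theorem equivalence : Equivalence (@E28 M) :=
  ⟨fun _ => ⟨rfl, Iff.rfl⟩, fun h => ⟨h.1.symm, h.2.symm⟩,
    fun h₁ h₂ => ⟨h₁.1.trans h₂.1, h₁.2.trans h₂.2⟩⟩

theorem countable_quotient (h : (Set.Iic #M).Countable) :
    Countable (Quotient (Setoid.mk E28 (@equivalence M))) := by
  have := h.to_subtype
  let f : Quotient (Setoid.mk E28 (@equivalence M)) → Set.Iic #M × Prop :=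
    Quotient.lift (fun X => (⟨#X, mk_set_le X⟩, X = Set.univ))
      fun _ _ h => Prod.ext (Subtype.ext h.1) (propext h.2)
  refine Function.Injective.countable (f := f) ?_
  rintro ⟨X⟩ ⟨Y⟩ h
  exact Quotient.sound ⟨congrArg (Subtype.val ∘ Prod.fst) h, Iff.of_eq (congrArg Prod.snd h)⟩

theorem of_mk_eq_of_mk_lt {X Y : Set M} (hXY : #X = #Y) (hX : #X < #M) : E28 X Y := by
  have ne_univ : ∀ Z : Set M, #Z < #M → Z ≠ Set.univ := by
    rintro Z hZ rfl
    exact hZ.ne mk_univ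
  exact ⟨hXY, iff_of_false (ne_univ X hX) (ne_univ Y (hXY ▸ hX))⟩

theorem exists_mk_eq_not [Infinite M] : ∃ X Y : Set M, #X = #Y ∧ ¬ E28 X Y := by
  obtain ⟨x⟩ := ‹Infinite M›.nonempty
  refine ⟨Set.univ, {x}ᶜ, ?_, fun h => (h.2.1 rfl).symm.subset (Set.mem_univ x) rfl⟩
  rw [mk_univ, mk_compl_of_infinite _
    (mk_singleton x ▸ one_lt_aleph0.trans_le (infinite_iff.1 ‹_›))]

end E28

theorem countable_Iic_aleph_one : (Set.Iic (ℵ₁ : Cardinal.{u})).Countable := by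
  rw [← Set.Iio_insert, ← succ_aleph0, Order.Iio_succ, ← Set.Iio_insert, ← range_natCast]
  exact ((Set.countable_range _).insert _).insert _

/-- On a domain of cardinality `ℵ₁`, the relation `E28` is an equivalence relation which is
cardinality coarsening on small concepts but not cardinality coarsening. -/
theorem E28_ccSmall_not_cc {M : Type u} (hM : Cardinal.mk M = Cardinal.aleph 1) :
    ∃ hE : Equivalence (@E28 M),
      (∀ X Y : Set M, Cardinal.mk X = Cardinal.mk Y →
        Cardinal.mk X ≤ Cardinal.mk (Quotient (Setoid.mk E28 hE)) → E28 X Y) ∧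
      (∃ X Y : Set M, Cardinal.mk X = Cardinal.mk Y ∧ ¬ E28 X Y) := by
  have := E28.countable_quotient (hM ▸ countable_Iic_aleph_one)
  have quotient_lt : #(Quotient (Setoid.mk E28 (@E28.equivalence M))) < #M :=
    calc _ ≤ ℵ₀ := mk_le_aleph0
      _ < #M := hM ▸ aleph0_lt_aleph_one
  have : Infinite M := infinite_iff.2 (hM ▸ aleph0_lt_aleph_one.le)
  exact ⟨E28.equivalence, fun X Y hXY hX => E28.of_mk_eq_of_mk_lt hXY (hX.trans_lt quotient_lt),
    E28.exists_mk_eq_not⟩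
end
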